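/- Let G = (V, E) be a finite simple graph with m edges, and construct the graph H as follows: starting from G, for each edge ij ∈ E add two new vertices k_{ij} and t_{ij} and add edges so that {i, j, k_{ij}, t_{ij}} forms a 4-clique; then add a single new sink vertex t and an edge t·t_{ij} for every ij ∈ E. If G is 3-colorable, then WLMC_I(H) ≥ 2√6·m + m, where I is the 3×3 identity matrix. -/
import Mathlib


open scoped Classical

/-- The Euclidean norm on `Fin 3 → ℝ`. -/
noncomputable def norm3 (v : Fin 3 → ℝ) : ℝ := Real.sqrt (∑ i, v i ^ 2)

/-- The `W`-stretched linear max-cut value of a finite simple graph: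
`(1/2) maxₓ ∑_{uv ∈ E} ‖W x(u) - W x(v)‖` over assignments of unit vectors in `ℝ³` to
the vertices (each unordered edge is counted twice in the double sum, whence the `1/4`). -/
noncomputable def wlmc {V : Type} [Fintype V] (W : Matrix (Fin 3) (Fin 3) ℝ)
    (G : SimpleGraph V) : ℝ :=
  sSup {c : ℝ | ∃ x : V → Fin 3 → ℝ, (∀ u, norm3 (x u) = 1) ∧
    c = (1 / 4) * ∑ u, ∑ v,
      if G.Adj u v then norm3 (W.mulVec (x u) - W.mulVec (x v)) else 0}

/-- The graph `H` of the all-weights-equal reduction: starting from `G`, each edge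
`ij ∈ E` gets two new vertices `k_{ij}`, `t_{ij}` forming a 4-clique `{i,j,k_{ij},t_{ij}}`,
and a single sink vertex `t` is joined to every `t_{ij}`. -/
def cliqueSinkGadget {V : Type} (G : SimpleGraph V) :
    SimpleGraph ((V ⊕ (G.edgeSet ⊕ G.edgeSet)) ⊕ Unit) :=
  SimpleGraph.fromRel fun a b =>
    match a, b with
    | Sum.inl (Sum.inl u), Sum.inl (Sum.inl v) => G.Adj u v
    | Sum.inl (Sum.inl u), Sum.inl (Sum.inr (Sum.inl e)) => u ∈ (e : Sym2 V)
    | Sum.inl (Sum.inl u), Sum.inl (Sum.inr (Sum.inr e)) => u ∈ (e : Sym2 V)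
    | Sum.inl (Sum.inr (Sum.inl e)), Sum.inl (Sum.inr (Sum.inr e')) =>
        (e : Sym2 V) = (e' : Sym2 V)
    | Sum.inl (Sum.inr (Sum.inr _)), Sum.inr _ => True
    | _, _ => False

/-! ### Auxiliary material for the proof -/

noncomputable def c3 : ℝ := (Real.sqrt 3)⁻¹

noncomputable def tet : Fin 4 → Fin 3 → ℝ
  | 0 => ![c3, c3, c3]
  | 1 => ![c3, -c3, -c3]
  | 2 => ![-c3, c3, -c3]
  | 3 => ![-c3, -c3, c3]

lemma c3_sq : c3 ^ 2 = 1 / 3 := by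
  rw [c3, inv_pow, Real.sq_sqrt (by norm_num : (3:ℝ) ≥ 0)]
  norm_num

lemma sqrt83 : Real.sqrt (8/3) = 2 * Real.sqrt 6 / 3 := by
  have h6 : Real.sqrt 6 ^ 2 = 6 := Real.sq_sqrt (by norm_num)
  rw [show (8/3:ℝ) = (2*Real.sqrt 6/3)^2 by rw [div_pow, mul_pow, h6]; norm_num]
  exact Real.sqrt_sq (by positivity)

lemma tet_norm (i : Fin 4) : norm3 (tet i) = 1 := by
  fin_cases i <;>
  · show Real.sqrt _ = 1
    rw [Fin.sum_univ_three]
    simp only [tet, Matrix.cons_val_zero, Matrix.cons_val_one, Matrix.head_cons,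
      Matrix.cons_val_two, Matrix.tail_cons]
    convert Real.sqrt_one using 2
    linear_combination 3 * c3_sq

lemma tet_dist (i j : Fin 4) (h : i ≠ j) : norm3 (tet i - tet j) = 2 * Real.sqrt 6 / 3 := by
  fin_cases i <;> fin_cases j <;> first
    | exact absurd rfl h
    | (show Real.sqrt _ = _
       rw [Fin.sum_univ_three]
       simp only [tet, Pi.sub_apply, Matrix.cons_val_zero, Matrix.cons_val_one,
         Matrix.head_cons, Matrix.cons_val_two, Matrix.tail_cons]
       convert sqrt83 using 2
       linear_combination 8 * c3_sq)

lemma tet_sink : norm3 (tet 3 - -(tet 3)) = 2 := by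
  show Real.sqrt _ = 2
  rw [Fin.sum_univ_three]
  simp only [tet, Pi.sub_apply, Pi.neg_apply, Matrix.cons_val_zero, Matrix.cons_val_one,
    Matrix.head_cons, Matrix.cons_val_two, Matrix.tail_cons]
  rw [show (2:ℝ) = Real.sqrt 4 by
    rw [show (4:ℝ) = 2^2 by norm_num, Real.sqrt_sq (by norm_num)]]
  congr 1
  linear_combination 12 * c3_sq

lemma norm3_neg (v : Fin 3 → ℝ) : norm3 (-v) = norm3 v := by simp [norm3]

lemma norm3_sub_comm (a b : Fin 3 → ℝ) : norm3 (a - b) = norm3 (b - a) := by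
  rw [show a - b = -(b - a) by ring, norm3_neg]

lemma norm3_eq_norm (v : Fin 3 → ℝ) :
    norm3 v = ‖(WithLp.equiv 2 (Fin 3 → ℝ)).symm v‖ := by
  rw [EuclideanSpace.norm_eq]
  simp [norm3, sq_abs]

lemma norm3_sub_le (a b : Fin 3 → ℝ) : norm3 (a - b) ≤ norm3 a + norm3 b := by
  rw [norm3_eq_norm, norm3_eq_norm, norm3_eq_norm]
  exact norm_sub_le _ _

def thirdIdx (a b : Fin 3) : Fin 3 :=
  if a ≠ 0 ∧ b ≠ 0 then 0 else if a ≠ 1 ∧ b ≠ 1 then 1 else 2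

lemma thirdIdx_comm : ∀ a b, thirdIdx a b = thirdIdx b a := by decide
lemma thirdIdx_ne : ∀ a b : Fin 3, a ≠ b → thirdIdx a b ≠ a ∧ thirdIdx a b ≠ b := by decide

lemma castSucc_ne_three : ∀ i : Fin 3, (Fin.castSucc i : Fin 4) ≠ 3 := by decide

section Gadget
variable {V : Type} (G : SimpleGraph V)

lemma adjAA (u v : V) :
    (cliqueSinkGadget G).Adj (.inl (.inl u)) (.inl (.inl v)) ↔ G.Adj u v := by
  rw [cliqueSinkGadget, SimpleGraph.fromRel_adj]
  constructor
  · rintro ⟨-, h | h⟩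
    · exact h
    · exact h.symm
  · intro h
    exact ⟨by simp [h.ne], Or.inl h⟩

lemma adjAB (u : V) (e : G.edgeSet) :
    (cliqueSinkGadget G).Adj (.inl (.inl u)) (.inl (.inr (.inl e))) ↔ u ∈ (e : Sym2 V) := by
  rw [cliqueSinkGadget, SimpleGraph.fromRel_adj]
  simp

lemma adjAC (u : V) (e : G.edgeSet) :
    (cliqueSinkGadget G).Adj (.inl (.inl u)) (.inl (.inr (.inr e))) ↔ u ∈ (e : Sym2 V) := by
  rw [cliqueSinkGadget, SimpleGraph.fromRel_adj]
  simp

lemma adjBC (e e' : G.edgeSet) :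
    (cliqueSinkGadget G).Adj (.inl (.inr (.inl e))) (.inl (.inr (.inr e'))) ↔ e = e' := by
  rw [cliqueSinkGadget, SimpleGraph.fromRel_adj]
  simp [Subtype.ext_iff]

lemma adjCD (e : G.edgeSet) (z : Unit) :
    (cliqueSinkGadget G).Adj (.inl (.inr (.inr e))) (.inr z) := by
  rw [cliqueSinkGadget, SimpleGraph.fromRel_adj]
  simp

lemma adjAD (u : V) (z : Unit) : ¬ (cliqueSinkGadget G).Adj (.inl (.inl u)) (.inr z) := by
  rw [cliqueSinkGadget, SimpleGraph.fromRel_adj]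
  simp

lemma adjBB (e e' : G.edgeSet) :
    ¬ (cliqueSinkGadget G).Adj (.inl (.inr (.inl e))) (.inl (.inr (.inl e'))) := by
  rw [cliqueSinkGadget, SimpleGraph.fromRel_adj]
  simp

lemma adjCC (e e' : G.edgeSet) :
    ¬ (cliqueSinkGadget G).Adj (.inl (.inr (.inr e))) (.inl (.inr (.inr e'))) := by
  rw [cliqueSinkGadget, SimpleGraph.fromRel_adj]
  simp

lemma adjBD (e : G.edgeSet) (z : Unit) :
    ¬ (cliqueSinkGadget G).Adj (.inl (.inr (.inl e))) (.inr z) := by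
  rw [cliqueSinkGadget, SimpleGraph.fromRel_adj]
  simp

lemma adjDD (z z' : Unit) : ¬ (cliqueSinkGadget G).Adj (.inr z) (.inr z') := by
  rw [cliqueSinkGadget, SimpleGraph.fromRel_adj]
  simp

/-- The color not used by either endpoint of an edge. -/
def thirdSym2 (C : G.Coloring (Fin 3)) (e : G.edgeSet) : Fin 3 :=
  Sym2.lift ⟨fun a b => thirdIdx (C a) (C b), fun a b => thirdIdx_comm (C a) (C b)⟩
    (e : Sym2 V)

lemma thirdSym2_ne (C : G.Coloring (Fin 3)) (e : G.edgeSet) (u : V)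
    (hu : u ∈ (e : Sym2 V)) : thirdSym2 G C e ≠ C u := by
  obtain ⟨p, hp⟩ := e
  induction p using Sym2.ind with
  | _ a b =>
    have hadj : G.Adj a b := G.mem_edgeSet.mp hp
    have hC : C a ≠ C b := C.valid hadj
    have hlift : thirdSym2 G C ⟨s(a,b), hp⟩ = thirdIdx (C a) (C b) := rfl
    rw [Sym2.mem_iff] at hu
    rcases hu with rfl | rfl
    · rw [hlift]; exact (thirdIdx_ne _ _ hC).1
    · rw [hlift]; exact (thirdIdx_ne _ _ hC).2

/-- The tetrahedral assignment of unit vectors to the gadget graph. -/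
noncomputable def tetAssign (C : G.Coloring (Fin 3)) :
    (V ⊕ (G.edgeSet ⊕ G.edgeSet)) ⊕ Unit → Fin 3 → ℝ :=
  Sum.elim
    (Sum.elim (fun u => tet (Fin.castSucc (C u)))
      (Sum.elim (fun e => tet (Fin.castSucc (thirdSym2 G C e))) (fun _ => tet 3)))
    (fun _ => - tet 3)

/-- The explicit edge-weight table realized by `tetAssign`. -/
noncomputable def gval [DecidableEq V] [DecidableRel G.Adj] :
    ((V ⊕ (G.edgeSet ⊕ G.edgeSet)) ⊕ Unit) → ((V ⊕ (G.edgeSet ⊕ G.edgeSet)) ⊕ Unit) → ℝ :=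
  Sum.elim
    (Sum.elim
      (fun u => Sum.elim
        (Sum.elim (fun v => if G.Adj u v then 2*Real.sqrt 6/3 else 0)
          (Sum.elim (fun e => if u ∈ (e : Sym2 V) then 2*Real.sqrt 6/3 else 0)
            (fun e => if u ∈ (e : Sym2 V) then 2*Real.sqrt 6/3 else 0)))
        (fun _ => 0))
      (Sum.elim
        (fun e => Sum.elim
          (Sum.elim (fun u => if u ∈ (e : Sym2 V) then 2*Real.sqrt 6/3 else 0)
            (Sum.elim (fun _ => 0)
              (fun e' => if e = e' then 2*Real.sqrt 6/3 else 0)))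
          (fun _ => 0))
        (fun e => Sum.elim
          (Sum.elim (fun u => if u ∈ (e : Sym2 V) then 2*Real.sqrt 6/3 else 0)
            (Sum.elim (fun e' => if e' = e then 2*Real.sqrt 6/3 else 0)
              (fun _ => 0)))
          (fun _ => 2))))
    (fun _ => Sum.elim
      (Sum.elim (fun _ => 0) (Sum.elim (fun _ => 0) (fun _ => (2:ℝ))))
      (fun _ => 0))

end Gadget

set_option maxHeartbeats 1000000 in
/-- If `G` is 3-colorable then `WLMC_I(H) ≥ 2√6·m + m`. -/
theorem stmt12 {V : Type} [Fintype V] [DecidableEq V] (G : SimpleGraph V)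
    [DecidableRel G.Adj] (m : ℕ) (hm : m = G.edgeFinset.card)
    (hcol : G.Colorable 3) :
    wlmc (1 : Matrix (Fin 3) (Fin 3) ℝ) (cliqueSinkGadget G) ≥
      2 * Real.sqrt 6 * m + m := by
  obtain ⟨C⟩ := hcol
  -- unit norms
  have hxnorm : ∀ u, norm3 (tetAssign G C u) = 1 := by
    rintro ((u | (e | e)) | z) <;>
      simp only [tetAssign, Sum.elim_inl, Sum.elim_inr]
    · exact tet_norm _
    · exact tet_norm _
    · exact tet_norm _
    · rw [norm3_neg]; exact tet_norm 3
  -- pointwise values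
  have hpt : ∀ a b, (if (cliqueSinkGadget G).Adj a b then
      norm3 (tetAssign G C a - tetAssign G C b) else 0) = gval G a b := by
    rintro ((u | (e | e)) | z) ((v | (e' | e')) | z') <;>
      simp only [tetAssign, gval, Sum.elim_inl, Sum.elim_inr]
    · -- AA
      rw [if_congr (adjAA G u v) rfl rfl]
      split_ifs with h
      · exact tet_dist _ _ (by simpa [Fin.castSucc_inj] using C.valid h)
      · rfl
    · -- AB
      rw [if_congr (adjAB G u e') rfl rfl]
      split_ifs with h
      · exact tet_dist _ _ (by
          simpa [Fin.castSucc_inj] using (thirdSym2_ne G C e' u h).symm)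
      · rfl
    · -- AC
      rw [if_congr (adjAC G u e') rfl rfl]
      split_ifs with h
      · exact tet_dist _ _ (castSucc_ne_three _)
      · rfl
    · -- AD
      rw [if_neg (adjAD G u z')]
    · -- BA
      rw [if_congr ((cliqueSinkGadget G).adj_comm _ _ |>.trans (adjAB G v e)) rfl rfl]
      split_ifs with h
      · rw [norm3_sub_comm]
        exact tet_dist _ _ (by
          simpa [Fin.castSucc_inj] using (thirdSym2_ne G C e v h).symm)
      · rfl
    · -- BB
      rw [if_neg (adjBB G e e')]
    · -- BC
      rw [if_congr (adjBC G e e') rfl rfl]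
      split_ifs with h
      · exact tet_dist _ _ (castSucc_ne_three _)
      · rfl
    · -- BD
      rw [if_neg (adjBD G e z')]
    · -- CA
      rw [if_congr ((cliqueSinkGadget G).adj_comm _ _ |>.trans (adjAC G v e)) rfl rfl]
      split_ifs with h
      · rw [norm3_sub_comm]
        exact tet_dist _ _ (castSucc_ne_three _)
      · rfl
    · -- CB
      rw [if_congr ((cliqueSinkGadget G).adj_comm _ _ |>.trans (adjBC G e' e)) rfl rfl]
      split_ifs with h
      · rw [norm3_sub_comm]
        exact tet_dist _ _ (castSucc_ne_three _)
      · rfl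
    · -- CC
      rw [if_neg (adjCC G e e')]
    · -- CD
      rw [if_pos (adjCD G e z')]
      exact tet_sink
    · -- DA
      rw [if_neg (fun h => adjAD G v z ((cliqueSinkGadget G).adj_comm _ _ |>.mp h))]
    · -- DB
      rw [if_neg (fun h => adjBD G e' z ((cliqueSinkGadget G).adj_comm _ _ |>.mp h))]
    · -- DC
      rw [if_pos ((cliqueSinkGadget G).adj_comm _ _ |>.mpr (adjCD G e' z))]
      rw [show (-tet 3 - tet 3 : Fin 3 → ℝ) = -(tet 3 - -(tet 3)) by ring, norm3_neg]
      exact tet_sink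
    · -- DD
      rw [if_neg (adjDD G z z')]
  -- helper sums
  have hEcard : ((Fintype.card G.edgeSet : ℕ) : ℝ) = (m : ℝ) := by
    rw [hm, SimpleGraph.edgeFinset, Set.toFinset_card]
  have key : ∀ (e : G.edgeSet) (r : ℝ),
      (∑ u : V, if u ∈ (e : Sym2 V) then r else 0) = 2 * r := by
    rintro ⟨p, hp⟩ r
    induction p using Sym2.ind with
    | _ a b =>
      have hab : a ≠ b := (G.mem_edgeSet.mp hp).ne
      have hcong : ∀ u : V, (if u ∈ ((⟨s(a,b), hp⟩ : G.edgeSet) : Sym2 V) then r else 0)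
          = if u ∈ ({a, b} : Finset V) then r else 0 := by
        intro u; simp [Sym2.mem_iff]
      rw [Finset.sum_congr rfl fun u _ => hcong u, Finset.sum_ite_mem,
        Finset.univ_inter, Finset.sum_pair hab]
      ring
  have hAA : (∑ u : V, ∑ v : V, if G.Adj u v then 2*Real.sqrt 6/3 else 0)
      = 2 * (m:ℝ) * (2*Real.sqrt 6/3) := by
    have h1 : ∀ u : V, (∑ v : V, if G.Adj u v then 2*Real.sqrt 6/3 else 0)
        = (G.degree u : ℝ) * (2*Real.sqrt 6/3) := by
      intro u
      rw [← Finset.sum_filter, Finset.sum_const, ← SimpleGraph.neighborFinset_eq_filter,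
        SimpleGraph.degree, nsmul_eq_mul]
    rw [Finset.sum_congr rfl fun u _ => h1 u, ← Finset.sum_mul, ← Nat.cast_sum,
      SimpleGraph.sum_degrees_eq_twice_card_edges, ← hm]
    push_cast; ring
  -- the value of the certificate
  have hg : (∑ a, ∑ b, gval G a b)
      = 12 * (m:ℝ) * (2*Real.sqrt 6/3) + 4 * m := by
    have hrowA : ∀ u : V, (∑ b, gval G (.inl (.inl u)) b)
        = (∑ v : V, if G.Adj u v then 2*Real.sqrt 6/3 else 0)
          + ((∑ e : G.edgeSet, if u ∈ (e : Sym2 V) then 2*Real.sqrt 6/3 else 0)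
          + (∑ e : G.edgeSet, if u ∈ (e : Sym2 V) then 2*Real.sqrt 6/3 else 0)) := by
      intro u
      simp only [Fintype.sum_sum_type, gval, Sum.elim_inl, Sum.elim_inr,
        Finset.sum_const_zero, add_zero]
    have hrowB : ∀ e : G.edgeSet, (∑ b, gval G (.inl (.inr (.inl e))) b)
        = 2 * (2*Real.sqrt 6/3) + (2*Real.sqrt 6/3) := by
      intro e
      simp only [Fintype.sum_sum_type, gval, Sum.elim_inl, Sum.elim_inr,
        Finset.sum_const_zero, add_zero, zero_add, Finset.sum_ite_eq,
        Finset.mem_univ, if_true]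
      rw [key e (2*Real.sqrt 6/3)]
    have hrowC : ∀ e : G.edgeSet, (∑ b, gval G (.inl (.inr (.inr e))) b)
        = 2 * (2*Real.sqrt 6/3) + (2*Real.sqrt 6/3) + 2 := by
      intro e
      simp only [Fintype.sum_sum_type, Fintype.sum_unique, gval, Sum.elim_inl,
        Sum.elim_inr, Finset.sum_const_zero, add_zero, zero_add,
        Finset.sum_ite_eq', Finset.mem_univ, if_true]
      rw [key e (2*Real.sqrt 6/3)]
    have hrowD : ∀ z : Unit, (∑ b, gval G (.inr z) b) = 2 * (m:ℝ) := by
      intro z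
      simp only [Fintype.sum_sum_type, Fintype.sum_unique, gval, Sum.elim_inl,
        Sum.elim_inr, Finset.sum_const_zero, add_zero, zero_add, Finset.sum_const,
        nsmul_eq_mul, Finset.card_univ]
      rw [hEcard]; ring
    rw [Fintype.sum_sum_type (f := fun a => ∑ b, gval G a b),
      Fintype.sum_sum_type (f := fun a => ∑ b, gval G (Sum.inl a) b),
      Fintype.sum_sum_type (f := fun a => ∑ b, gval G (Sum.inl (Sum.inr a)) b),
      Finset.sum_congr rfl fun u _ => hrowA u,
      Finset.sum_congr rfl fun e _ => hrowB e,
      Finset.sum_congr rfl fun e _ => hrowC e,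
      Finset.sum_congr rfl fun z _ => hrowD z]
    have hswap : (∑ u : V, ∑ e : G.edgeSet,
        if u ∈ (e : Sym2 V) then 2*Real.sqrt 6/3 else 0)
        = 2 * (m:ℝ) * (2*Real.sqrt 6/3) := by
      rw [Finset.sum_comm, Finset.sum_congr rfl fun e _ => key e (2*Real.sqrt 6/3),
        Finset.sum_const, Finset.card_univ, nsmul_eq_mul, hEcard]
      ring
    rw [Finset.sum_add_distrib, Finset.sum_add_distrib, hAA, hswap]
    simp only [Finset.sum_const, nsmul_eq_mul, Fintype.sum_unique, Finset.card_univ, Fintype.card_unit, Nat.cast_one]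
    rw [hEcard]
    ring
  have hval : (∑ a, ∑ b, if (cliqueSinkGadget G).Adj a b then
      norm3 ((1 : Matrix (Fin 3) (Fin 3) ℝ).mulVec (tetAssign G C a)
        - (1 : Matrix (Fin 3) (Fin 3) ℝ).mulVec (tetAssign G C b)) else 0)
      = 12 * (m:ℝ) * (2*Real.sqrt 6/3) + 4 * m := by
    simp only [Matrix.one_mulVec]
    rw [Finset.sum_congr rfl fun a _ => Finset.sum_congr rfl fun b _ => hpt a b]
    exact hg
  rw [ge_iff_le, wlmc]
  refine le_trans (le_of_eq ?_) (le_csSup ?_ ⟨tetAssign G C, hxnorm, rfl⟩)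
  · rw [hval]; ring
  · -- bounded above
    refine ⟨(1/4) * ∑ _u : (V ⊕ (G.edgeSet ⊕ G.edgeSet)) ⊕ Unit,
      ∑ _v : (V ⊕ (G.edgeSet ⊕ G.edgeSet)) ⊕ Unit, (2:ℝ), ?_⟩
    rintro c ⟨y, hy, rfl⟩
    have hterm : ∀ u v : (V ⊕ (G.edgeSet ⊕ G.edgeSet)) ⊕ Unit,
        (if (cliqueSinkGadget G).Adj u v then
        norm3 ((1 : Matrix (Fin 3) (Fin 3) ℝ).mulVec (y u)
          - (1 : Matrix (Fin 3) (Fin 3) ℝ).mulVec (y v)) else 0) ≤ 2 := by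
      intro u v
      rw [Matrix.one_mulVec, Matrix.one_mulVec]
      split_ifs
      · calc norm3 (y u - y v) ≤ norm3 (y u) + norm3 (y v) := norm3_sub_le _ _
          _ = 2 := by rw [hy, hy]; norm_num
      · norm_num
    refine mul_le_mul_of_nonneg_left ?_ (by norm_num)
    exact Finset.sum_le_sum fun u _ => Finset.sum_le_sum fun v _ => hterm u v
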